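/- arXiv:2202.11014 — 10 statements merged into one kernel-verified Lean document; each statement's English description precedes it below -/
import Mathlib

section
/- Let f : ℝ^n → ℝ be continuous and bounded from below, let t > 0, and suppose the Moreau envelope u(·,t) is (Fréchet) differentiable at a point x ∈ ℝ^n. Then prox_{tf}(x) is a singleton {x̂}, and ∇u(x,t) = (x − x̂)/t. -/
open Filter Topology

/-- The Moreau envelope `u(x, t) = ⨅ z, f z + ‖z - x‖² / (2t)`. -/
noncomputable def moreauEnv {n : ℕ} (f : EuclideanSpace ℝ (Fin n) → ℝ) (t : ℝ)
    (x : EuclideanSpace ℝ (Fin n)) : ℝ :=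
  ⨅ z, f z + ‖z - x‖ ^ 2 / (2 * t)

/-- The proximal set `prox_{tf}(x)`: the set of minimizers of `z ↦ f z + ‖z - x‖²/(2t)`. -/
def proxSet {n : ℕ} (f : EuclideanSpace ℝ (Fin n) → ℝ) (t : ℝ)
    (x : EuclideanSpace ℝ (Fin n)) : Set (EuclideanSpace ℝ (Fin n)) :=
  {z | ∀ w, f z + ‖z - x‖ ^ 2 / (2 * t) ≤ f w + ‖w - x‖ ^ 2 / (2 * t)}

/-!
A prox point `z` of `x` gives the quadratic majorant
`y ↦ u x + ⟪t⁻¹ • (x - z), y - x⟫ + ‖y - x‖² / (2t)` of `u = moreauEnv f t`, touching it at `x`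
(expand `‖z - y‖²` around `x`). Where `u` is differentiable this forces `∇u x = t⁻¹ • (x - z)`,
so `z` is determined by the gradient. A prox point exists because the objective is continuous and
coercive.
-/

open scoped RealInnerProductSpace

theorem HasFDerivAt.eq_of_eventuallyLE_of_eq {E : Type*} [NormedAddCommGroup E] [NormedSpace ℝ E]
    {u φ : E → ℝ} {u' φ' : StrongDual ℝ E} {x : E} (hu : HasFDerivAt u u' x)
    (hφ : HasFDerivAt φ φ' x) (hle : u ≤ᶠ[𝓝 x] φ) (heq : u x = φ x) :
    u' = φ' := by
  have hmax : IsLocalMax (fun y => u y - φ y) x := by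
    filter_upwards [hle] with y hy
    linarith
  exact sub_eq_zero.mp (hmax.hasFDerivAt_eq_zero (hu.sub hφ))

theorem gradient_eq_of_le_add_inner_add_sq {E : Type*} [NormedAddCommGroup E]
    [InnerProductSpace ℝ E] [CompleteSpace E] {u : E → ℝ} {x v : E} {c : ℝ}
    (hu : DifferentiableAt ℝ u x) (hle : ∀ y, u y ≤ u x + ⟪v, y - x⟫ + c * ‖y - x‖ ^ 2) :
    gradient u x = v := by
  have hφ : HasFDerivAt (fun y => u x + ⟪v, y - x⟫ + c * ‖y - x‖ ^ 2)
      (InnerProductSpace.toDual ℝ E v) x := by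
    have hsub : HasFDerivAt (fun y : E => y - x) (ContinuousLinearMap.id ℝ E) x :=
      (hasFDerivAt_id x).sub_const x
    exact ((((innerSL ℝ v).hasFDerivAt.comp x hsub).const_add (u x)).add
      (hsub.norm_sq.const_mul c)).congr_fderiv (by ext; simp)
  exact (InnerProductSpace.toDual ℝ E).injective
    (hu.hasGradientAt.hasFDerivAt.eq_of_eventuallyLE_of_eq hφ (Eventually.of_forall hle)
      (by simp))

theorem tendsto_add_norm_sub_sq_cocompact {E : Type*} [NormedAddCommGroup E] [ProperSpace E]
    {g : E → ℝ} (hg : BddBelow (Set.range g)) {c : ℝ} (hc : 0 < c) (x : E) :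
    Tendsto (fun z => g z + c * ‖z - x‖ ^ 2) (cocompact E) atTop := by
  obtain ⟨m, hm⟩ := hg
  refine tendsto_atTop_add_left_of_le _ m (fun z => hm ⟨z, rfl⟩) ?_
  have hnorm : Tendsto (fun z => ‖z - x‖) (cocompact E) atTop :=
    tendsto_norm_cocompact_atTop.comp (Homeomorph.subRight x).isClosedEmbedding.tendsto_cocompact
  exact ((tendsto_pow_atTop two_ne_zero).comp hnorm).const_mul_atTop hc

section Moreau

variable {n : ℕ} {f : EuclideanSpace ℝ (Fin n) → ℝ} {t : ℝ}

theorem bddBelow_range_prox_objective (hf : BddBelow (Set.range f)) (ht : 0 ≤ t)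
    (y : EuclideanSpace ℝ (Fin n)) :
    BddBelow (Set.range fun z => f z + ‖z - y‖ ^ 2 / (2 * t)) := by
  obtain ⟨m, hm⟩ := hf
  refine ⟨m, ?_⟩
  rintro _ ⟨z, rfl⟩
  have : 0 ≤ ‖z - y‖ ^ 2 / (2 * t) := by positivity
  linarith [hm ⟨z, rfl⟩]

theorem proxSet_nonempty (hf : Continuous f) (hbdd : BddBelow (Set.range f)) (ht : 0 < t)
    (x : EuclideanSpace ℝ (Fin n)) : (proxSet f t x).Nonempty := by
  have hcoer := tendsto_add_norm_sub_sq_cocompact hbdd (inv_pos.mpr (mul_pos two_pos ht)) x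
  simp_rw [inv_mul_eq_div] at hcoer
  exact (by fun_prop : Continuous fun z => f z + ‖z - x‖ ^ 2 / (2 * t)).exists_forall_le hcoer

theorem moreauEnv_eq_of_mem_proxSet (hf : BddBelow (Set.range f)) (ht : 0 ≤ t)
    {x z : EuclideanSpace ℝ (Fin n)} (hz : z ∈ proxSet f t x) :
    moreauEnv f t x = f z + ‖z - x‖ ^ 2 / (2 * t) :=
  le_antisymm (ciInf_le (bddBelow_range_prox_objective hf ht x) z) (le_ciInf hz)

theorem moreauEnv_le_add_inner_add_sq (hf : BddBelow (Set.range f)) (ht : 0 < t)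
    {x z : EuclideanSpace ℝ (Fin n)} (hz : z ∈ proxSet f t x) (y : EuclideanSpace ℝ (Fin n)) :
    moreauEnv f t y ≤
      moreauEnv f t x + ⟪t⁻¹ • (x - z), y - x⟫ + (2 * t)⁻¹ * ‖y - x‖ ^ 2 := by
  have hexpand : ‖z - y‖ ^ 2 = ‖z - x‖ ^ 2 + 2 * ⟪x - z, y - x⟫ + ‖y - x‖ ^ 2 := by
    rw [show z - y = (z - x) - (y - x) by abel, norm_sub_sq_real,
      show x - z = -(z - x) by abel, inner_neg_left]
    ring
  rw [moreauEnv_eq_of_mem_proxSet hf ht.le hz, real_inner_smul_left]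
  calc moreauEnv f t y ≤ f z + ‖z - y‖ ^ 2 / (2 * t) :=
        ciInf_le (bddBelow_range_prox_objective hf ht.le y) z
    _ = _ := by rw [hexpand]; field_simp; ring

theorem gradient_moreauEnv_of_mem_proxSet (hf : BddBelow (Set.range f)) (ht : 0 < t)
    {x z : EuclideanSpace ℝ (Fin n)} (hdiff : DifferentiableAt ℝ (moreauEnv f t) x)
    (hz : z ∈ proxSet f t x) :
    gradient (moreauEnv f t) x = t⁻¹ • (x - z) :=
  gradient_eq_of_le_add_inner_add_sq hdiff (moreauEnv_le_add_inner_add_sq hf ht hz)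

end Moreau

theorem stmt_2 (n : ℕ) (f : EuclideanSpace ℝ (Fin n) → ℝ)
    (hf : Continuous f) (hbdd : BddBelow (Set.range f))
    (t : ℝ) (ht : 0 < t) (x : EuclideanSpace ℝ (Fin n))
    (hdiff : DifferentiableAt ℝ (moreauEnv f t) x) :
    ∃ xhat : EuclideanSpace ℝ (Fin n), proxSet f t x = {xhat} ∧
      gradient (moreauEnv f t) x = t⁻¹ • (x - xhat) := by
  obtain ⟨xhat, hxhat⟩ := proxSet_nonempty hf hbdd ht x
  have hgrad := gradient_moreauEnv_of_mem_proxSet hbdd ht hdiff hxhat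
  refine ⟨xhat, Set.eq_singleton_iff_unique_mem.mpr ⟨hxhat, fun z hz => ?_⟩, hgrad⟩
  have hsame : t⁻¹ • (x - z) = t⁻¹ • (x - xhat) :=
    (gradient_moreauEnv_of_mem_proxSet hbdd ht hdiff hz).symm.trans hgrad
  simpa using smul_right_injective _ (inv_ne_zero ht.ne') hsame
end

section
/- Let f : ℝ^n → ℝ be continuous and bounded from below, let t > 0, and suppose x ∈ ℝ^n is a local minimizer of the Moreau envelope u(·,t). Then: (i) x ∈ prox_{tf}(x), i.e. x itself attains the infimum defining u(x,t); (ii) u(x,t) = f(x); (iii) u(·,t) is differentiable at x with ∇u(x,t) = 0; and (iv) x is a local minimizer of f. -/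
open Filter Topology

set_option maxHeartbeats 1000000 in
theorem stmt_3 (n : ℕ) (f : EuclideanSpace ℝ (Fin n) → ℝ)
    (hf : Continuous f) (hbdd : BddBelow (Set.range f))
    (t : ℝ) (ht : 0 < t) (x : EuclideanSpace ℝ (Fin n))
    (hmin : IsLocalMin (moreauEnv f t) x) :
    x ∈ proxSet f t x ∧
    moreauEnv f t x = f x ∧
    HasGradientAt (moreauEnv f t) (0 : EuclideanSpace ℝ (Fin n)) x ∧
    IsLocalMin f x := by
  obtain ⟨m, hm⟩ := hbdd
  have hmf : ∀ z, m ≤ f z := fun z => hm ⟨z, rfl⟩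
  have ht2 : (0:ℝ) < 2 * t := by linarith
  set u := moreauEnv f t with hu
  have hbdd' : ∀ y, BddBelow (Set.range fun z => f z + ‖z - y‖ ^ 2 / (2 * t)) := by
    intro y
    refine ⟨m, ?_⟩
    rintro v ⟨z, rfl⟩
    have : (0:ℝ) ≤ ‖z - y‖ ^ 2 / (2 * t) := by positivity
    linarith [hmf z]
  have hle : ∀ y w, u y ≤ f w + ‖w - y‖ ^ 2 / (2 * t) := fun y w => ciInf_le (hbdd' y) w
  have hufle : ∀ y, u y ≤ f y := by
    intro y
    have := hle y y
    simpa using this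
  have hmu : ∀ y, m ≤ u y := by
    intro y
    refine le_ciInf fun z => ?_
    have : (0:ℝ) ≤ ‖z - y‖ ^ 2 / (2 * t) := by positivity
    linarith [hmf z]
  obtain ⟨δ, hδ, hδmin⟩ := Metric.eventually_nhds_iff.mp hmin
  -- bound on near-minimizers
  set R : ℝ := Real.sqrt (2 * t * (u x + 1 - m)) with hR
  have hR0 : 0 ≤ R := Real.sqrt_nonneg _
  set lam : ℝ := min (1/2) (δ / (2 * (R + 1))) with hlam
  have hlam0 : 0 < lam := by
    apply lt_min (by norm_num)
    positivity
  have hlam12 : lam ≤ 1/2 := min_le_left _ _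
  have hlamδ : lam ≤ δ / (2 * (R + 1)) := min_le_right _ _
  -- key: f x ≤ u x
  have key : f x ≤ u x := by
    by_contra h
    push_neg at h
    set c : ℝ := f x - u x with hc
    have hc0 : 0 < c := by simp [hc]; linarith
    obtain ⟨δ', hδ', hfc⟩ := Metric.continuousAt_iff.mp hf.continuousAt (c/2) (by linarith)
    set ε : ℝ := min (c/2) (min 1 (lam * δ' ^ 2 / (4 * t))) with hε
    have hε0 : 0 < ε := by
      apply lt_min (by linarith)
      apply lt_min one_pos
      positivity
    have hεc : ε ≤ c/2 := min_le_left _ _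
    have hε1 : ε ≤ 1 := le_trans (min_le_right _ _) (min_le_left _ _)
    have hεδ : ε ≤ lam * δ' ^ 2 / (4 * t) := le_trans (min_le_right _ _) (min_le_right _ _)
    obtain ⟨z, hz⟩ : ∃ z, f z + ‖z - x‖ ^ 2 / (2 * t) < u x + ε :=
      exists_lt_of_ciInf_lt (lt_add_of_pos_right _ hε0)
    -- z is close to x within R
    have hzR : ‖z - x‖ ≤ R := by
      have h1 : ‖z - x‖ ^ 2 ≤ 2 * t * (u x + 1 - m) := by
        have := hmf z
        have h2 : ‖z - x‖ ^ 2 / (2 * t) < u x + ε - f z := by linarith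
        have h3 : ‖z - x‖ ^ 2 < (2*t) * (u x + ε - f z) := by
          rw [div_lt_iff₀ ht2] at h2; linarith [h2]
        nlinarith
      calc ‖z - x‖ = Real.sqrt (‖z - x‖ ^ 2) := by
            rw [Real.sqrt_sq (norm_nonneg _)]
        _ ≤ R := Real.sqrt_le_sqrt h1
    -- the perturbed point
    set y : EuclideanSpace ℝ (Fin n) := x + lam • (z - x) with hy
    have hdy : dist y x < δ := by
      have : dist y x = lam * ‖z - x‖ := by
        rw [dist_eq_norm]
        simp [hy, norm_smul, abs_of_pos hlam0]
      rw [this]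
      have h1 : lam * ‖z - x‖ ≤ (δ / (2 * (R + 1))) * (R + 1) := by
        apply mul_le_mul hlamδ (by linarith) (norm_nonneg _) (by positivity)
      have h2 : (δ / (2 * (R + 1))) * (R + 1) = δ / 2 := by
        field_simp
      linarith
    have huy : u x ≤ u y := hδmin hdy
    have hzy : ‖z - y‖ ^ 2 = (1 - lam) ^ 2 * ‖z - x‖ ^ 2 := by
      have : z - y = (1 - lam) • (z - x) := by
        simp only [hy]
        rw [sub_smul, one_smul]
        abel
      rw [this, norm_smul, mul_pow]
      congr 1
      rw [Real.norm_eq_abs, sq_abs]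
    have huy2 : u y ≤ f z + (1 - lam) ^ 2 * ‖z - x‖ ^ 2 / (2 * t) := by
      have := hle y z
      rwa [hzy] at this
    -- derive ‖z-x‖² < δ'²
    have hs : ‖z - x‖ ^ 2 < δ' ^ 2 := by
      have h1' : (1 - (1 - lam) ^ 2) * ‖z - x‖ ^ 2 / (2 * t) < ε := by
        have heq : (1 - (1 - lam) ^ 2) * ‖z - x‖ ^ 2 / (2 * t)
            = ‖z - x‖ ^ 2 / (2 * t) - (1 - lam) ^ 2 * ‖z - x‖ ^ 2 / (2 * t) := by ring
        rw [heq]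
        linarith [le_trans huy huy2, hz]
      have h1 : (1 - (1 - lam) ^ 2) * ‖z - x‖ ^ 2 < ε * (2 * t) :=
        (div_lt_iff₀ ht2).mp h1'
      have hfac : lam ≤ 1 - (1 - lam) ^ 2 := by
        nlinarith [mul_nonneg hlam0.le (by linarith : (0:ℝ) ≤ 1 - lam)]
      have h4 : lam * ‖z - x‖ ^ 2 < ε * (2 * t) :=
        lt_of_le_of_lt (mul_le_mul_of_nonneg_right hfac (sq_nonneg _)) h1
      have h5 : ε * (2 * t) ≤ lam * (δ' ^ 2 / 2) := by
        have h6 := mul_le_mul_of_nonneg_left hεδ ht2.le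
        have h7 : 2 * t * (lam * δ' ^ 2 / (4 * t)) = lam * (δ' ^ 2 / 2) := by
          field_simp; ring
        linarith [h7 ▸ h6]
      have h8 : ‖z - x‖ ^ 2 < δ' ^ 2 / 2 :=
        (mul_lt_mul_iff_right₀ hlam0).mp (lt_of_lt_of_le h4 h5)
      have : (0:ℝ) < δ' ^ 2 := by positivity
      linarith
    have hdz : dist z x < δ' := by
      rw [dist_eq_norm]
      exact lt_of_pow_lt_pow_left₀ 2 hδ'.le hs
    have hfz : |f z - f x| < c/2 := by
      have := hfc hdz
      rwa [Real.dist_eq] at this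
    have : (0:ℝ) ≤ ‖z - x‖ ^ 2 / (2 * t) := by positivity
    have habs := abs_lt.mp hfz
    linarith [hz]
  have hux : u x = f x := le_antisymm (hufle x) key
  have hprox : x ∈ proxSet f t x := by
    intro w
    have := hle x w
    simpa [hux] using this
  refine ⟨hprox, hux, ?_, ?_⟩
  · -- gradient
    have : HasFDerivAt u (0 : EuclideanSpace ℝ (Fin n) →L[ℝ] ℝ) x := by
      rw [hasFDerivAt_iff_isLittleO_nhds_zero]
      rw [Asymptotics.isLittleO_iff]
      intro c hc
      have hball : ∀ᶠ h : EuclideanSpace ℝ (Fin n) in 𝓝 0, ‖h‖ < min δ (2 * t * c) := by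
        have : Metric.ball (0 : EuclideanSpace ℝ (Fin n)) (min δ (2*t*c)) ∈ 𝓝 0 :=
          Metric.ball_mem_nhds _ (lt_min hδ (by positivity))
        filter_upwards [this] with h hh
        simpa [dist_eq_norm] using hh
      filter_upwards [hball] with h hh
      have hh1 : ‖h‖ < δ := lt_of_lt_of_le hh (min_le_left _ _)
      have hh2 : ‖h‖ < 2 * t * c := lt_of_lt_of_le hh (min_le_right _ _)
      have hlo : u x ≤ u (x + h) := by
        apply hδmin
        simpa [dist_eq_norm] using hh1
      have hhi : u (x + h) ≤ u x + ‖h‖ ^ 2 / (2 * t) := by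
        have := hle (x + h) x
        have hn : ‖x - (x + h)‖ = ‖h‖ := by
          rw [show x - (x + h) = -h by abel, norm_neg]
        rw [hn, ← hux] at this
        linarith
      simp only [ContinuousLinearMap.zero_apply, sub_zero]
      rw [Real.norm_eq_abs, abs_le]
      constructor
      · have : (0:ℝ) ≤ c * ‖h‖ := by positivity
        linarith
      · have h1 : ‖h‖ ^ 2 / (2 * t) ≤ c * ‖h‖ := by
          have ha : (0:ℝ) ≤ ‖h‖ := norm_nonneg h
          set a : ℝ := ‖h‖ with hadef
          rw [div_le_iff₀ ht2, pow_two]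
          nlinarith
        linarith
    simpa using this.hasGradientAt
  · -- local min of f
    filter_upwards [hmin] with y hy
    calc f x = u x := hux.symm
      _ ≤ u y := hy
      _ ≤ f y := hufle y
end

section
/- Let f : ℝ^n → ℝ be continuous and satisfy the γ-minimizers assumption for some γ > 0. Let t > 0, let x ∈ ℝ^n be a local minimizer of the Moreau envelope u(·,t), and suppose t ≥ ‖x − x⋆‖²/(2γ) for some global minimizer x⋆ of f. Then x is a global minimizer of f. -/
open Filter Topology RealInnerProductSpace

/-- The Fréchet subdifferential of `f` at `x`. -/
noncomputable def frechetSubdiff {n : ℕ} (f : EuclideanSpace ℝ (Fin n) → ℝ)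
    (x : EuclideanSpace ℝ (Fin n)) : Set (EuclideanSpace ℝ (Fin n)) :=
  {v | 0 ≤ Filter.liminf (fun z => (f z - f x - ⟪v, z - x⟫) / ‖z - x‖) (𝓝[≠] x)}

lemma liminf_junk {α : Type*} (w : α → ℝ) (l : Filter α)
    (h : ¬ Filter.IsCoboundedUnder (· ≥ ·) l w) : Filter.liminf w l = 0 := by
  rw [Filter.liminf_eq]
  apply Real.sSup_of_not_bddAbove
  rintro ⟨b, hb⟩
  exact h ⟨b, fun a ha => hb (by simpa [Filter.eventually_map] using ha)⟩

theorem stmt_6 (n : ℕ) (f : EuclideanSpace ℝ (Fin n) → ℝ)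
    (hf : Continuous f) (γ : ℝ) (hγ : 0 < γ)
    (hSne : {z : EuclideanSpace ℝ (Fin n) | f z ≤ (⨅ w, f w) + γ}.Nonempty)
    (hScpt : IsCompact {z : EuclideanSpace ℝ (Fin n) | f z ≤ (⨅ w, f w) + γ})
    (hcrit : ∀ x ∈ {z : EuclideanSpace ℝ (Fin n) | f z ≤ (⨅ w, f w) + γ},
      (0 : EuclideanSpace ℝ (Fin n)) ∈ frechetSubdiff f x → ∀ z, f x ≤ f z)
    (t : ℝ) (ht : 0 < t) (x xstar : EuclideanSpace ℝ (Fin n))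
    (hmin : IsLocalMin (moreauEnv f t) x)
    (hxstar : ∀ z, f xstar ≤ f z)
    (htγ : ‖x - xstar‖ ^ 2 / (2 * γ) ≤ t) :
    ∀ z, f x ≤ f z := by
  rcases subsingleton_or_nontrivial (EuclideanSpace ℝ (Fin n)) with hcase | hcase
  · intro z
    rw [Subsingleton.elim x z]
  set φ : EuclideanSpace ℝ (Fin n) → ℝ := fun z => f z + ‖z - x‖ ^ 2 / (2 * t) with hφdef
  have hφc : Continuous φ := by fun_prop
  have hfxle : ∀ z, f xstar ≤ φ z := fun z =>
    le_trans (hxstar z) (le_add_of_nonneg_right (by positivity))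
  set r : ℝ := Real.sqrt (2 * t * (f x - f xstar)) + 1 with hrdef
  have hr0 : 0 ≤ r := by positivity
  obtain ⟨zb, hzbK, hzbmin⟩ := (isCompact_closedBall x r).exists_isMinOn
    ⟨x, Metric.mem_closedBall_self hr0⟩ hφc.continuousOn
  have hφx : φ x = f x := by simp [hφdef]
  have hzb : ∀ z, φ zb ≤ φ z := by
    intro z
    by_cases hz : z ∈ Metric.closedBall x r
    · exact hzbmin hz
    · have hd : r < ‖z - x‖ := by
        rw [← dist_eq_norm]
        simpa [Metric.mem_closedBall, not_le] using hz
      have h1 : 2 * t * (f x - f xstar) < ‖z - x‖ ^ 2 := by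
        have hs : Real.sqrt (2 * t * (f x - f xstar)) < ‖z - x‖ := by
          have := Real.sqrt_nonneg (2 * t * (f x - f xstar))
          linarith
        calc 2 * t * (f x - f xstar)
            = Real.sqrt (2 * t * (f x - f xstar)) ^ 2 := by
              rw [Real.sq_sqrt]
              nlinarith [hxstar x]
          _ < ‖z - x‖ ^ 2 := by
              apply pow_lt_pow_left₀ hs (Real.sqrt_nonneg _)
              norm_num
      have h2 : f x - f xstar ≤ ‖z - x‖ ^ 2 / (2 * t) := by
        rw [le_div_iff₀ (by positivity)]
        nlinarith
      have h3 : φ x ≤ φ z := by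
        rw [hφx]
        have := hxstar z
        simp only [hφdef]
        linarith
      exact le_trans (hzbmin (Metric.mem_closedBall_self hr0)) h3
  have hBdd : BddBelow (Set.range φ) := ⟨f xstar, by rintro _ ⟨z, rfl⟩; exact hfxle z⟩
  have hu : moreauEnv f t x = φ zb := by
    rw [moreauEnv]
    exact le_antisymm (ciInf_le hBdd zb) (le_ciInf hzb)
  have hug : ∀ y, moreauEnv f t y ≤ f zb + ‖zb - y‖ ^ 2 / (2 * t) := by
    intro y
    rw [moreauEnv]
    apply ciInf_le ⟨f xstar, ?_⟩ zb
    rintro _ ⟨z, rfl⟩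
    exact le_trans (hxstar z) (le_add_of_nonneg_right (by positivity))
  have hgmin : IsLocalMin (fun y => f zb + ‖zb - y‖ ^ 2 / (2 * t)) x := by
    filter_upwards [hmin] with y hy
    calc f zb + ‖zb - x‖ ^ 2 / (2 * t) = moreauEnv f t x := by rw [hu]
      _ ≤ moreauEnv f t y := hy
      _ ≤ f zb + ‖zb - y‖ ^ 2 / (2 * t) := hug y
  have hzbx : zb = x := by
    by_contra hne
    have hnorm : 0 < ‖zb - x‖ := by
      rw [norm_pos_iff]
      exact sub_ne_zero.mpr hne
    obtain ⟨ε, hε, hball⟩ := Metric.eventually_nhds_iff.mp hgmin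
    set s : ℝ := min (1/2) (ε / (2 * ‖zb - x‖)) with hsdef
    have hs0 : 0 < s := by
      apply lt_min (by norm_num)
      positivity
    have hs12 : s ≤ 1/2 := min_le_left _ _
    set y : EuclideanSpace ℝ (Fin n) := x + s • (zb - x) with hydef
    have hdy : dist y x < ε := by
      have h1 : dist y x = s * ‖zb - x‖ := by
        rw [dist_eq_norm, hydef]
        simp [norm_smul, abs_of_pos hs0]
      rw [h1]
      have h2 : s ≤ ε / (2 * ‖zb - x‖) := min_le_right _ _
      have h3 : s * ‖zb - x‖ ≤ ε / 2 := by
        calc s * ‖zb - x‖ ≤ (ε / (2 * ‖zb - x‖)) * ‖zb - x‖ :=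
              mul_le_mul_of_nonneg_right h2 hnorm.le
          _ = ε / 2 := by field_simp
      linarith
    have hgy := hball hdy
    dsimp only at hgy
    have hzby : zb - y = (1 - s) • (zb - x) := by
      rw [hydef]
      module
    have hny : ‖zb - y‖ = (1 - s) * ‖zb - x‖ := by
      rw [hzby, norm_smul, Real.norm_eq_abs, abs_of_pos (by linarith)]
    rw [hny] at hgy
    have h2t : (0:ℝ) < 2 * t := by positivity
    have h4 : ‖zb - x‖ ^ 2 / (2 * t) ≤ ((1 - s) * ‖zb - x‖) ^ 2 / (2 * t) := by linarith
    have key : ‖zb - x‖ ^ 2 ≤ ((1 - s) * ‖zb - x‖) ^ 2 :=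
      le_of_mul_le_mul_right ((div_le_div_iff₀ h2t h2t).mp h4) h2t
    have hpos : (0:ℝ) < (2 * s - s ^ 2) * (‖zb - x‖ * ‖zb - x‖) :=
      mul_pos (by nlinarith) (mul_pos hnorm hnorm)
    nlinarith [key, hpos]
  have key : ∀ z, f x ≤ f z + ‖z - x‖ ^ 2 / (2 * t) := by
    intro z
    have := hzb z
    rw [hzbx, hφx] at this
    exact this
  have hinf : (⨅ w, f w) = f xstar := by
    apply le_antisymm
    · exact ciInf_le ⟨f xstar, by rintro _ ⟨z, rfl⟩; exact hxstar z⟩ xstar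
    · exact le_ciInf hxstar
  have hxS : f x ≤ (⨅ w, f w) + γ := by
    rw [hinf]
    have h1 := key xstar
    have h2 : ‖xstar - x‖ ^ 2 / (2 * t) ≤ γ := by
      rw [norm_sub_rev, div_le_iff₀ (by positivity)]
      have h3 : ‖x - xstar‖ ^ 2 ≤ t * (2 * γ) := (div_le_iff₀ (by positivity)).mp htγ
      nlinarith
    linarith
  have h0 : (0 : EuclideanSpace ℝ (Fin n)) ∈ frechetSubdiff f x := by
    simp only [frechetSubdiff, Set.mem_setOf_eq]
    set v : EuclideanSpace ℝ (Fin n) → ℝ :=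
      fun z => (f z - f x - ⟪(0 : EuclideanSpace ℝ (Fin n)), z - x⟫) / ‖z - x‖ with hvdef
    by_cases hcb : Filter.IsCoboundedUnder (· ≥ ·) (𝓝[≠] x) v
    · have hten : Tendsto (fun z : EuclideanSpace ℝ (Fin n) => -(‖z - x‖ / (2 * t)))
          (𝓝[≠] x) (𝓝 0) := by
        have hc : Continuous (fun z : EuclideanSpace ℝ (Fin n) => -(‖z - x‖ / (2 * t))) := by
          fun_prop
        have h := (hc.tendsto x).mono_left (nhdsWithin_le_nhds (s := {x}ᶜ))
        simpa using h
      have hle : ∀ᶠ z in 𝓝[≠] x, -(‖z - x‖ / (2 * t)) ≤ v z := by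
        filter_upwards [self_mem_nhdsWithin] with z hz
        have hn : 0 < ‖z - x‖ := by
          rw [norm_pos_iff]
          exact sub_ne_zero.mpr hz
        rw [hvdef]
        simp only [inner_zero_left, sub_zero]
        rw [le_div_iff₀ hn]
        have hk := key z
        have : -(‖z - x‖ / (2 * t)) * ‖z - x‖ = -(‖z - x‖ ^ 2 / (2 * t)) := by ring
        rw [this]
        linarith
      have hlim : Filter.liminf (fun z : EuclideanSpace ℝ (Fin n) => -(‖z - x‖ / (2 * t)))
          (𝓝[≠] x) = 0 := hten.liminf_eq
      calc (0:ℝ) = _ := hlim.symm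
        _ ≤ Filter.liminf v (𝓝[≠] x) := liminf_le_liminf hle hten.isBoundedUnder_ge hcb
    · rw [liminf_junk v _ hcb]
  exact hcrit x hxS h0
end

section
/- Let f : ℝ^n → ℝ be continuous and suppose the sublevel set S_γ = {z ∈ ℝ^n : f(z) ≤ inf f + γ} is nonempty and compact for some γ > 0. Then for every T > 0, the set Q = {z ∈ ℝ^n : u(z,T) ≤ inf f + γ} is bounded. -/
open Filter Topology

theorem stmt_7 (n : ℕ) (f : EuclideanSpace ℝ (Fin n) → ℝ)
    (hf : Continuous f) (γ : ℝ) (hγ : 0 < γ)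
    (hSne : {z : EuclideanSpace ℝ (Fin n) | f z ≤ (⨅ w, f w) + γ}.Nonempty)
    (hScpt : IsCompact {z : EuclideanSpace ℝ (Fin n) | f z ≤ (⨅ w, f w) + γ})
    (T : ℝ) (hT : 0 < T) :
    Bornology.IsBounded
      {z : EuclideanSpace ℝ (Fin n) | moreauEnv f T z ≤ (⨅ w, f w) + γ} := by
  set m : ℝ := ⨅ w, f w with hm
  obtain ⟨x₀, hx₀S, hx₀min⟩ := hScpt.exists_isMinOn hSne hf.continuousOn
  have hbdd : BddBelow (Set.range f) := by
    refine ⟨min (f x₀) (m + γ), ?_⟩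
    rintro _ ⟨z, rfl⟩
    by_cases hz : f z ≤ m + γ
    · exact le_trans (min_le_left _ _) (hx₀min hz)
    · exact le_trans (min_le_right _ _) (le_of_not_ge hz)
  have hmle : ∀ w, m ≤ f w := fun w => ciInf_le hbdd w
  obtain ⟨R, hR⟩ := hScpt.isBounded.subset_closedBall 0
  have key : ∀ z, moreauEnv f T z ≤ m + γ →
      ∃ w, f w ≤ m + γ ∧ ‖w - z‖ ^ 2 ≤ 2 * T * (γ + 1) := by
    intro z hz
    by_contra hcon
    push_neg at hcon
    have hzS : m + γ < f z := by
      by_contra h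
      have := hcon z (le_of_not_gt h)
      simp at this
      nlinarith
    set δ : ℝ := f z - (m + γ) with hδ
    have hδpos : 0 < δ := by simp [hδ]; linarith
    obtain ⟨η, hηpos, hη⟩ := Metric.continuous_iff.mp hf z (δ / 2) (by linarith)
    set ε : ℝ := min 1 (min (δ / 2) (η ^ 2 / (2 * T))) with hε
    have hεpos : 0 < ε := by
      apply lt_min one_pos
      apply lt_min (by linarith)
      positivity
    have hlt : moreauEnv f T z < m + γ + ε := lt_of_le_of_lt hz (by linarith)
    obtain ⟨w, hw⟩ := exists_lt_of_ciInf_lt hlt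
    have hnn : 0 ≤ ‖w - z‖ ^ 2 / (2 * T) := by positivity
    by_cases hwS : f w ≤ m + γ
    · have h1 : 2 * T * (γ + 1) < ‖w - z‖ ^ 2 := hcon w hwS
      have h2 : γ + 1 < ‖w - z‖ ^ 2 / (2 * T) := by
        rw [lt_div_iff₀ (by linarith)]; nlinarith
      have hε1 : ε ≤ 1 := min_le_left _ _
      have := hmle w
      linarith
    · push_neg at hwS
      have h1 : ‖w - z‖ ^ 2 / (2 * T) < ε := by linarith
      have h2 : ‖w - z‖ ^ 2 < η ^ 2 := by
        have hε2 : ε ≤ η ^ 2 / (2 * T) := le_trans (min_le_right _ _) (min_le_right _ _)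
        have := lt_of_lt_of_le h1 hε2
        calc ‖w - z‖ ^ 2 = ‖w - z‖ ^ 2 / (2 * T) * (2 * T) := by field_simp
          _ < η ^ 2 / (2 * T) * (2 * T) := by
              apply mul_lt_mul_of_pos_right this (by linarith)
          _ = η ^ 2 := by field_simp
      have h3 : dist w z < η := by
        rw [dist_eq_norm]
        nlinarith [norm_nonneg (w - z), abs_nonneg η, sq_abs η, le_abs_self η]
      have h4 := hη w h3
      rw [Real.dist_eq, abs_lt] at h4
      have hε3 : ε ≤ δ / 2 := le_trans (min_le_right _ _) (min_le_left _ _)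
      linarith
  have hsub : {z : EuclideanSpace ℝ (Fin n) | moreauEnv f T z ≤ m + γ} ⊆
      Metric.closedBall 0 (R + Real.sqrt (2 * T * (γ + 1))) := by
    intro z hz
    obtain ⟨w, hw1, hw2⟩ := key z hz
    have hwB : ‖w‖ ≤ R := by
      have := hR hw1
      simpa using this
    have hwz : ‖w - z‖ ≤ Real.sqrt (2 * T * (γ + 1)) := by
      rw [show ‖w - z‖ = Real.sqrt (‖w - z‖ ^ 2) by
        rw [Real.sqrt_sq (norm_nonneg _)]]
      exact Real.sqrt_le_sqrt hw2
    simp only [Metric.mem_closedBall, dist_zero_right]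
    calc ‖z‖ = ‖w - (w - z)‖ := by rw [sub_sub_cancel]
      _ ≤ ‖w‖ + ‖w - z‖ := norm_sub_le _ _
      _ ≤ R + Real.sqrt (2 * T * (γ + 1)) := add_le_add hwB hwz
  exact Metric.isBounded_closedBall.subset hsub
end

section
/- Let f : ℝ^n → ℝ be continuous with a nonempty compact sublevel set S_γ = {z : f(z) ≤ inf f + γ} for some γ > 0, and let x⋆ be a global minimizer of f. Let T > 0 and let {x^k} ⊂ ℝ^n and {t_k} ⊂ (0,T] be sequences such that the sequence {u(x^k,t_k)} is monotonically nonincreasing and t_1 ≥ ‖x⋆ − x^1‖²/(2γ). Then the sequence {x^k} is bounded. -/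
open Filter Topology

/-- The infimum defining the Moreau envelope is attained when `f` is continuous and
bounded below. -/
lemma moreau_attained {n : ℕ} (f : EuclideanSpace ℝ (Fin n) → ℝ) (hf : Continuous f)
    (xstar : EuclideanSpace ℝ (Fin n)) (hxstar : ∀ z, f xstar ≤ f z)
    (t : ℝ) (htpos : 0 < t) (x : EuclideanSpace ℝ (Fin n)) :
    ∃ z, ∀ y, f z + ‖z - x‖ ^ 2 / (2 * t) ≤ f y + ‖y - x‖ ^ 2 / (2 * t) := by
  set g : EuclideanSpace ℝ (Fin n) → ℝ := fun y => f y + ‖y - x‖ ^ 2 / (2 * t) with hg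
  have hgc : Continuous g := by
    apply hf.add
    exact ((continuous_id.sub continuous_const).norm.pow 2).div_const _
  apply hgc.exists_forall_le' x
  -- eventually in cocompact, g x ≤ g y
  have h2t : (0:ℝ) < 2 * t := by linarith
  have hnorm : Tendsto (fun y : EuclideanSpace ℝ (Fin n) => ‖y‖)
      (cocompact _) atTop := tendsto_norm_cocompact_atTop
  have hev : ∀ᶠ y : EuclideanSpace ℝ (Fin n) in cocompact _,
      ‖x‖ + Real.sqrt (2 * t * (g x - f xstar)) ≤ ‖y‖ :=
    hnorm.eventually (eventually_ge_atTop _)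
  filter_upwards [hev] with y hy
  have hyx : Real.sqrt (2 * t * (g x - f xstar)) ≤ ‖y - x‖ := by
    have : ‖y‖ - ‖x‖ ≤ ‖y - x‖ := norm_sub_norm_le y x
    linarith
  have hsq : 2 * t * (g x - f xstar) ≤ ‖y - x‖ ^ 2 := by
    have h0 : (0:ℝ) ≤ Real.sqrt (2 * t * (g x - f xstar)) := Real.sqrt_nonneg _
    calc 2 * t * (g x - f xstar) ≤ Real.sqrt (2 * t * (g x - f xstar)) ^ 2 := by
          rcases le_or_gt (2 * t * (g x - f xstar)) 0 with h | h
          · exact h.trans (sq_nonneg _)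
          · rw [Real.sq_sqrt h.le]
      _ ≤ ‖y - x‖ ^ 2 := by
          apply pow_le_pow_left₀ h0 hyx
  have : g x - f xstar ≤ ‖y - x‖ ^ 2 / (2 * t) := by
    rw [le_div_iff₀ h2t] at *
    linarith
  have hfy : f xstar ≤ f y := hxstar y
  simp only [hg]
  linarith

theorem stmt_8 (n : ℕ) (f : EuclideanSpace ℝ (Fin n) → ℝ)
    (hf : Continuous f) (γ : ℝ) (hγ : 0 < γ)
    (hSne : {z : EuclideanSpace ℝ (Fin n) | f z ≤ (⨅ w, f w) + γ}.Nonempty)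
    (hScpt : IsCompact {z : EuclideanSpace ℝ (Fin n) | f z ≤ (⨅ w, f w) + γ})
    (xstar : EuclideanSpace ℝ (Fin n)) (hxstar : ∀ z, f xstar ≤ f z)
    (T : ℝ) (hT : 0 < T)
    (x : ℕ → EuclideanSpace ℝ (Fin n)) (t : ℕ → ℝ)
    (ht : ∀ k, t k ∈ Set.Ioc 0 T)
    (hmono : Antitone (fun k => moreauEnv f (t k) (x k)))
    (ht1 : ‖xstar - x 0‖ ^ 2 / (2 * γ) ≤ t 0) :
    Bornology.IsBounded (Set.range x) := by
  have hinf : (⨅ w, f w) = f xstar :=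
    le_antisymm (ciInf_le ⟨f xstar, Set.forall_mem_range.2 hxstar⟩ xstar) (le_ciInf hxstar)
  -- S bounded
  obtain ⟨R, hR⟩ := isBounded_iff_forall_norm_le.1 hScpt.isBounded
  have ht0 := ht 0
  -- bound on u(x 0, t 0)
  have hbdd : ∀ k, BddBelow (Set.range fun z => f z + ‖z - x k‖ ^ 2 / (2 * t k)) := by
    intro k
    refine ⟨f xstar, Set.forall_mem_range.2 fun z => ?_⟩
    have h1 : f xstar ≤ f z := hxstar z
    have h2 : (0:ℝ) ≤ ‖z - x k‖ ^ 2 / (2 * t k) := by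
      have := (ht k).1; positivity
    linarith
  have hu0 : moreauEnv f (t 0) (x 0) ≤ f xstar + γ := by
    have h1 : moreauEnv f (t 0) (x 0) ≤ f xstar + ‖xstar - x 0‖ ^ 2 / (2 * t 0) :=
      ciInf_le (hbdd 0) xstar
    have h2 : ‖xstar - x 0‖ ^ 2 / (2 * t 0) ≤ γ := by
      rw [div_le_iff₀ (by linarith [(ht 0).1] : (0:ℝ) < 2 * t 0)]
      rw [div_le_iff₀ (by linarith : (0:ℝ) < 2 * γ)] at ht1
      nlinarith
    linarith
  -- uniform bound on ‖x k‖
  refine isBounded_iff_forall_norm_le.2 ⟨R + Real.sqrt (2 * T * γ), ?_⟩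
  rintro _ ⟨k, rfl⟩
  obtain ⟨z, hz⟩ := moreau_attained f hf xstar hxstar (t k) (ht k).1 (x k)
  have hval : f z + ‖z - x k‖ ^ 2 / (2 * t k) ≤ f xstar + γ := by
    have h1 : f z + ‖z - x k‖ ^ 2 / (2 * t k) ≤ moreauEnv f (t k) (x k) := le_ciInf hz
    have h2 : moreauEnv f (t k) (x k) ≤ moreauEnv f (t 0) (x 0) := hmono (Nat.zero_le k)
    linarith
  have htk := ht k
  have hq : (0:ℝ) ≤ ‖z - x k‖ ^ 2 / (2 * t k) := by
    have := htk.1; positivity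
  have hzS : z ∈ {z : EuclideanSpace ℝ (Fin n) | f z ≤ (⨅ w, f w) + γ} := by
    simp only [Set.mem_setOf_eq, hinf]; linarith
  have hzR : ‖z‖ ≤ R := hR z hzS
  have hfz : f xstar ≤ f z := hxstar z
  have hdist : ‖z - x k‖ ^ 2 ≤ 2 * T * γ := by
    have h3 : ‖z - x k‖ ^ 2 / (2 * t k) ≤ γ := by linarith
    rw [div_le_iff₀ (by linarith [htk.1] : (0:ℝ) < 2 * t k)] at h3
    nlinarith [htk.1, htk.2, sq_nonneg ‖z - x k‖]
  have hsqrt : ‖z - x k‖ ≤ Real.sqrt (2 * T * γ) :=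
    (Real.le_sqrt (norm_nonneg _) (by positivity)).2 hdist
  calc ‖x k‖ = ‖z - (z - x k)‖ := by rw [sub_sub_cancel]
    _ ≤ ‖z‖ + ‖z - x k‖ := norm_sub_le _ _
    _ ≤ R + Real.sqrt (2 * T * γ) := add_le_add hzR hsqrt
end

section
/- Let f : ℝ^n → ℝ be continuous and bounded from below. Fix η₋ ∈ (0,1), 0 < τ ≤ T, and a step size α ∈ (1 − √η₋, 1 + √η₋). Let {t_k} ⊂ [τ, T] satisfy t_{k+1} ≥ η₋ t_k for all k, and let {x^k}, {x̂^k} ⊂ ℝ^n satisfy x̂^k ∈ prox_{t_k f}(x^k) and x^{k+1} = x^k − α (x^k − x̂^k) for all k. Then there exists μ > 0 such that u(x^{k+1}, t_{k+1}) ≤ u(x^k, t_k) − (μ/2)‖x^k − x̂^k‖² for all k; consequently the sequence {u(x^k,t_k)} is monotonically decreasing and convergent. -/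
open Filter Topology

lemma moreau_bdd {n : ℕ} (f : EuclideanSpace ℝ (Fin n) → ℝ) {B : ℝ}
    (hB : ∀ w, B ≤ f w) (t : ℝ) (ht : 0 < t) (x : EuclideanSpace ℝ (Fin n)) :
    BddBelow (Set.range fun z => f z + ‖z - x‖ ^ 2 / (2 * t)) := by
  refine ⟨B, ?_⟩
  rintro y ⟨z, rfl⟩
  have : 0 ≤ ‖z - x‖ ^ 2 / (2 * t) := by positivity
  linarith [hB z]

lemma moreau_eq {n : ℕ} (f : EuclideanSpace ℝ (Fin n) → ℝ) {B : ℝ}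
    (hB : ∀ w, B ≤ f w) (t : ℝ) (ht : 0 < t) (x z : EuclideanSpace ℝ (Fin n))
    (hz : z ∈ proxSet f t x) :
    moreauEnv f t x = f z + ‖z - x‖ ^ 2 / (2 * t) := by
  apply le_antisymm
  · exact ciInf_le (moreau_bdd f hB t ht x) z
  · exact le_ciInf hz

theorem stmt_9 (n : ℕ) (f : EuclideanSpace ℝ (Fin n) → ℝ)
    (hf : Continuous f) (hbdd : BddBelow (Set.range f))
    (ηm : ℝ) (hηm : 0 < ηm) (hηm1 : ηm < 1)
    (τ T : ℝ) (hτ : 0 < τ) (hτT : τ ≤ T)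
    (α : ℝ) (hα₁ : 1 - Real.sqrt ηm < α) (hα₂ : α < 1 + Real.sqrt ηm)
    (t : ℕ → ℝ) (ht : ∀ k, t k ∈ Set.Icc τ T) (htstep : ∀ k, ηm * t k ≤ t (k + 1))
    (x xhat : ℕ → EuclideanSpace ℝ (Fin n))
    (hprox : ∀ k, xhat k ∈ proxSet f (t k) (x k))
    (hupdate : ∀ k, x (k + 1) = x k - α • (x k - xhat k)) :
    ∃ μ > (0 : ℝ),
      (∀ k, moreauEnv f (t (k + 1)) (x (k + 1)) ≤
          moreauEnv f (t k) (x k) - μ / 2 * ‖x k - xhat k‖ ^ 2) ∧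
      Antitone (fun k => moreauEnv f (t k) (x k)) ∧
      ∃ L : ℝ, Tendsto (fun k => moreauEnv f (t k) (x k)) atTop (𝓝 L) := by
  obtain ⟨B, hB⟩ := hbdd
  have hB' : ∀ w, B ≤ f w := fun w => hB ⟨w, rfl⟩
  have hT : 0 < T := lt_of_lt_of_le hτ hτT
  have htpos : ∀ k, 0 < t k := fun k => lt_of_lt_of_le hτ (ht k).1
  have hsq : (1 - α) ^ 2 < ηm := by
    have hs : Real.sqrt ηm ^ 2 = ηm := Real.sq_sqrt hηm.le
    nlinarith [hα₁, hα₂]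
  set μ : ℝ := (1 - (1 - α) ^ 2 / ηm) / T with hμdef
  have hμpos : 0 < μ := by
    apply div_pos _ hT
    have : (1 - α) ^ 2 / ηm < 1 := (div_lt_one hηm).mpr hsq
    linarith
  refine ⟨μ, hμpos, ?_⟩
  have key : ∀ k, moreauEnv f (t (k + 1)) (x (k + 1)) ≤
      moreauEnv f (t k) (x k) - μ / 2 * ‖x k - xhat k‖ ^ 2 := by
    intro k
    have h1 : moreauEnv f (t (k + 1)) (x (k + 1)) ≤
        f (xhat k) + ‖xhat k - x (k + 1)‖ ^ 2 / (2 * t (k + 1)) :=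
      ciInf_le (moreau_bdd f hB' _ (htpos _) _) (xhat k)
    have hdiff : xhat k - x (k + 1) = (α - 1) • (x k - xhat k) := by
      rw [hupdate k]
      module
    have hnorm : ‖xhat k - x (k + 1)‖ ^ 2 = (1 - α) ^ 2 * ‖x k - xhat k‖ ^ 2 := by
      rw [hdiff, norm_smul, mul_pow, Real.norm_eq_abs, sq_abs]
      ring_nf
    have h2 : moreauEnv f (t k) (x k) = f (xhat k) + ‖xhat k - x k‖ ^ 2 / (2 * t k) :=
      moreau_eq f hB' _ (htpos k) _ _ (hprox k)
    rw [hnorm] at h1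
    rw [h2]
    have hnn : ‖xhat k - x k‖ = ‖x k - xhat k‖ := by rw [norm_sub_rev]
    rw [hnn]
    set s := ‖x k - xhat k‖ ^ 2 with hs
    have hsnn : 0 ≤ s := by positivity
    -- coefficient inequality
    have hco : (1 - α) ^ 2 / (2 * t (k + 1)) + μ / 2 ≤ 1 / (2 * t k) := by
      have ht1 : 0 < t (k + 1) := htpos (k + 1)
      have ht0 : 0 < t k := htpos k
      have hstep := htstep k
      have hc1 : (1 - α) ^ 2 / (2 * t (k + 1)) ≤ (1 - α) ^ 2 / (2 * (ηm * t k)) := by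
        apply div_le_div_of_nonneg_left (by positivity) (by positivity)
        linarith
      have hμT : μ * t k ≤ 1 - (1 - α) ^ 2 / ηm := by
        have : μ * t k ≤ μ * T := by
          apply mul_le_mul_of_nonneg_left (ht k).2 hμpos.le
        rw [hμdef] at this
        rwa [div_mul_cancel₀ _ hT.ne'] at this
      have hc2 : (1 - α) ^ 2 / (2 * (ηm * t k)) + μ / 2 ≤ 1 / (2 * t k) := by
        have hd : (1 - α) ^ 2 / (2 * (ηm * t k)) = ((1 - α) ^ 2 / ηm) / (2 * t k) := by
          rw [div_div]; ring_nf
        have hsum : ((1 - α) ^ 2 / ηm) / (2 * t k) + μ / 2 =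
            ((1 - α) ^ 2 / ηm + μ * t k) / (2 * t k) := by
          field_simp
        rw [hd, hsum]
        apply div_le_div_of_nonneg_right ?_ (by positivity) |>.trans_eq rfl
        case _ => linarith
      linarith
    have := mul_le_mul_of_nonneg_right hco hsnn
    have hexp : ((1 - α) ^ 2 / (2 * t (k + 1)) + μ / 2) * s =
        (1 - α) ^ 2 * s / (2 * t (k + 1)) + μ / 2 * s := by ring
    have hexp2 : 1 / (2 * t k) * s = s / (2 * t k) := by ring
    rw [hexp, hexp2] at this
    linarith
  have hanti : Antitone (fun k => moreauEnv f (t k) (x k)) := by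
    apply antitone_nat_of_succ_le
    intro k
    have := key k
    have hnn : 0 ≤ μ / 2 * ‖x k - xhat k‖ ^ 2 := by positivity
    simpa using le_trans this (by linarith)
  refine ⟨key, hanti, ?_⟩
  have hbd : BddBelow (Set.range fun k => moreauEnv f (t k) (x k)) := by
    refine ⟨B, ?_⟩
    rintro y ⟨k, rfl⟩
    apply le_ciInf
    intro z
    have : 0 ≤ ‖z - x k‖ ^ 2 / (2 * t k) :=
      div_nonneg (sq_nonneg _) (by linarith [htpos k])
    linarith [hB' z]
  exact ⟨_, tendsto_atTop_ciInf hanti hbd⟩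
end

section
/- Fix constants 0 < η₋ < 1 < η₊, θ ∈ (0,1), δ > 0, and 0 < τ ≤ T. Let {g^k} ⊂ ℝ^n be a sequence with ‖g^k‖ → 0, and let {t_k} ⊂ [τ, T] be generated from some t_1 ∈ [τ, T] by the rule t_{k+1} = min(η₊ t_k, T) if ‖g^k‖ ≤ θ‖g^{k−1}‖ + δ, and t_{k+1} = max(η₋ t_k, τ) otherwise. Then there exists N ∈ ℕ such that t_k = T for all k ≥ N. -/
open Filter Topology

theorem stmt_11 (n : ℕ)
    (ηm ηp θ δ τ T : ℝ)
    (hηm : 0 < ηm) (hηm1 : ηm < 1) (hηp : 1 < ηp)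
    (hθ : θ ∈ Set.Ioo (0 : ℝ) 1) (hδ : 0 < δ)
    (hτ : 0 < τ) (hτT : τ ≤ T)
    (g : ℕ → EuclideanSpace ℝ (Fin n))
    (hg : Tendsto (fun k => ‖g k‖) atTop (𝓝 0))
    (t : ℕ → ℝ) (ht0 : t 0 ∈ Set.Icc τ T)
    (hstep : ∀ k, t (k + 1) =
      if ‖g (k + 1)‖ ≤ θ * ‖g k‖ + δ then min (ηp * t k) T else max (ηm * t k) τ) :
    ∃ N : ℕ, ∀ k ≥ N, t k = T := by
  obtain ⟨θ0, θ1⟩ := hθ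
  -- invariant t k ∈ [τ, T]
  have hIcc : ∀ k, t k ∈ Set.Icc τ T := by
    intro k
    induction k with
    | zero => exact ht0
    | succ k ih =>
      obtain ⟨h1, h2⟩ := ih
      rw [hstep k]
      split
      · constructor
        · refine le_min ?_ hτT
          calc τ ≤ t k := h1
          _ = 1 * t k := (one_mul _).symm
          _ ≤ ηp * t k := by
              apply mul_le_mul_of_nonneg_right hηp.le (hτ.le.trans h1)
        · exact min_le_right _ _
      · constructor
        · exact le_max_right _ _
        · refine max_le ?_ hτT
          calc ηm * t k ≤ 1 * t k := by
                apply mul_le_mul_of_nonneg_right hηm1.le (hτ.le.trans h1)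
          _ = t k := one_mul _
          _ ≤ T := h2
  -- eventually ‖g k‖ < δ
  obtain ⟨K, hK⟩ := (Metric.tendsto_atTop.mp hg δ hδ)
  have hcond : ∀ k ≥ K, t (k + 1) = min (ηp * t k) T := by
    intro k hk
    rw [hstep k, if_pos]
    have := hK (k + 1) (le_trans hk (Nat.le_succ k))
    rw [Real.dist_eq, sub_zero, abs_of_nonneg (norm_nonneg _)] at this
    have hθg : 0 ≤ θ * ‖g k‖ := mul_nonneg θ0.le (norm_nonneg _)
    linarith
  -- lower bound by geometric growth
  have hlow : ∀ m, min (ηp ^ m * τ) T ≤ t (K + m) := by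
    intro m
    induction m with
    | zero =>
      simp only [pow_zero, one_mul, Nat.add_zero]
      exact le_trans (min_le_left _ _) (hIcc K).1
    | succ m ih =>
      have hKm := hIcc (K + m)
      rw [show K + (m + 1) = (K + m) + 1 from rfl, hcond (K + m) (Nat.le_add_right K m)]
      rcases le_or_gt (ηp ^ m * τ) T with h | h
      · have h1 : ηp ^ m * τ ≤ t (K + m) := by
          have := ih; rwa [min_eq_left h] at this
        refine le_min ?_ (min_le_right _ _)
        refine le_trans (min_le_left _ _) ?_
        rw [pow_succ, mul_comm (ηp ^ m) ηp, mul_assoc]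
        exact mul_le_mul_of_nonneg_left h1 (le_trans zero_le_one hηp.le)
      · have h1 : T ≤ t (K + m) := by
          have := ih; rwa [min_eq_right h.le] at this
        have h2 : t (K + m) = T := le_antisymm hKm.2 h1
        refine le_min (le_trans (min_le_right _ _) ?_) (min_le_right _ _)
        rw [h2]
        nlinarith [hτ.trans_le hτT]
  -- pick m with ηp ^ m * τ ≥ T
  obtain ⟨m, hm⟩ := pow_unbounded_of_one_lt (T / τ) hηp
  have hmT : T ≤ ηp ^ m * τ := by
    rw [div_lt_iff₀ hτ] at hm
    linarith
  have hT : t (K + m) = T := by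
    have := hlow m
    rw [min_eq_right hmT] at this
    exact le_antisymm (hIcc (K + m)).2 this
  refine ⟨K + m, fun k hk => ?_⟩
  obtain ⟨j, rfl⟩ := Nat.exists_eq_add_of_le hk
  induction j with
  | zero => exact hT
  | succ j ih =>
    rw [show K + m + (j + 1) = (K + m + j) + 1 from rfl,
      hcond (K + m + j) (by omega), ih (by omega)]
    have hT0 : 0 < T := hτ.trans_le hτT
    rw [min_eq_right]
    nlinarith
end

section
/- Let f : ℝ^n → ℝ be continuous and bounded from below, and let T > 0. Suppose {z^k} ⊂ ℝ^n converges to a point x^∞ ∈ ℝ^n, and {ẑ^k} ⊂ ℝ^n satisfies ẑ^k ∈ prox_{Tf}(z^k) for all k with ‖z^k − ẑ^k‖ → 0. Then u(x^∞, T) = f(x^∞). -/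
open Filter Topology

theorem stmt_12 (n : ℕ) (f : EuclideanSpace ℝ (Fin n) → ℝ)
    (hf : Continuous f) (hbdd : BddBelow (Set.range f))
    (T : ℝ) (hT : 0 < T)
    (z zhat : ℕ → EuclideanSpace ℝ (Fin n)) (xinf : EuclideanSpace ℝ (Fin n))
    (hz : Tendsto z atTop (𝓝 xinf))
    (hprox : ∀ k, zhat k ∈ proxSet f T (z k))
    (hgap : Tendsto (fun k => ‖z k - zhat k‖) atTop (𝓝 0)) :
    moreauEnv f T xinf = f xinf := by
  obtain ⟨m, hm⟩ := hbdd
  have hbdd' : BddBelow (Set.range fun w : EuclideanSpace ℝ (Fin n) =>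
      f w + ‖w - xinf‖ ^ 2 / (2 * T)) := by
    refine ⟨m, ?_⟩
    rintro _ ⟨w, rfl⟩
    have h1 : m ≤ f w := hm ⟨w, rfl⟩
    have h2 : (0:ℝ) ≤ ‖w - xinf‖ ^ 2 / (2 * T) := by positivity
    linarith
  -- zhat tends to xinf
  have hdz : Tendsto (fun k => z k - zhat k) atTop (𝓝 0) :=
    tendsto_zero_iff_norm_tendsto_zero.mpr hgap
  have hzhat : Tendsto zhat atTop (𝓝 xinf) := by
    have := hz.sub hdz
    simpa using this
  -- key inequality: f xinf ≤ f w + ‖w - xinf‖²/(2T)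
  have key : ∀ w, f xinf ≤ f w + ‖w - xinf‖ ^ 2 / (2 * T) := by
    intro w
    have hL : Tendsto (fun k => f (zhat k) + ‖zhat k - z k‖ ^ 2 / (2 * T)) atTop
        (𝓝 (f xinf)) := by
      have h1 : Tendsto (fun k => f (zhat k)) atTop (𝓝 (f xinf)) :=
        (hf.tendsto xinf).comp hzhat
      have h2 : Tendsto (fun k => ‖zhat k - z k‖ ^ 2 / (2 * T)) atTop (𝓝 0) := by
        have hgap' : Tendsto (fun k => ‖zhat k - z k‖) atTop (𝓝 0) := by
          simpa [norm_sub_rev] using hgap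
        have := ((hgap'.pow 2).div_const (2 * T))
        simpa using this
      simpa using h1.add h2
    have hR : Tendsto (fun k => f w + ‖w - z k‖ ^ 2 / (2 * T)) atTop
        (𝓝 (f w + ‖w - xinf‖ ^ 2 / (2 * T))) := by
      have h3 : Tendsto (fun k => ‖w - z k‖) atTop (𝓝 ‖w - xinf‖) :=
        ((continuous_const.sub continuous_id).norm.tendsto xinf).comp hz
      have := (tendsto_const_nhds : Tendsto (fun _ : ℕ => f w) atTop (𝓝 (f w))).add ((h3.pow 2).div_const (2 * T))
      simpa using this
    exact le_of_tendsto_of_tendsto' hL hR fun k => hprox k w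
  refine le_antisymm ?_ ?_
  · have := ciInf_le hbdd' xinf
    simpa [moreauEnv] using this
  · exact le_ciInf key
end

section
/- Let f : ℝ^n → ℝ be continuous with a nonempty compact sublevel set S_γ = {z : f(z) ≤ inf f + γ} for some γ > 0, and let T > 0. Suppose {x^k}, {x̂^k} ⊂ ℝ^n satisfy x̂^k ∈ prox_{Tf}(x^k) for all k, ‖x^k − x̂^k‖ → 0, and u(x^k, T) → inf f as k → ∞. Then f(x^k) → inf f as k → ∞. -/
open Filter Topology

theorem stmt_13 (n : ℕ) (f : EuclideanSpace ℝ (Fin n) → ℝ)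
    (hf : Continuous f) (γ : ℝ) (hγ : 0 < γ)
    (hSne : {z : EuclideanSpace ℝ (Fin n) | f z ≤ (⨅ w, f w) + γ}.Nonempty)
    (hScpt : IsCompact {z : EuclideanSpace ℝ (Fin n) | f z ≤ (⨅ w, f w) + γ})
    (T : ℝ) (hT : 0 < T)
    (x xhat : ℕ → EuclideanSpace ℝ (Fin n))
    (hprox : ∀ k, xhat k ∈ proxSet f T (x k))
    (hgap : Tendsto (fun k => ‖x k - xhat k‖) atTop (𝓝 0))
    (henv : Tendsto (fun k => moreauEnv f T (x k)) atTop (𝓝 (⨅ w, f w))) :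
    Tendsto (fun k => f (x k)) atTop (𝓝 (⨅ w, f w)) := by
  set m := ⨅ w, f w with hm
  set S := {z : EuclideanSpace ℝ (Fin n) | f z ≤ m + γ} with hS
  -- f is bounded below
  obtain ⟨z0, hz0S, hz0min⟩ := hScpt.exists_isMinOn hSne hf.continuousOn
  have hbdd : BddBelow (Set.range f) := by
    refine ⟨min (f z0) (m + γ), ?_⟩
    rintro _ ⟨z, rfl⟩
    by_cases hz : f z ≤ m + γ
    · exact le_trans (min_le_left _ _) (hz0min hz)
    · exact le_trans (min_le_right _ _) (le_of_not_ge hz)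
  have hmle : ∀ z, m ≤ f z := fun z => ciInf_le hbdd z
  -- f (xhat k) ≤ moreauEnv f T (x k)
  have hle : ∀ k, f (xhat k) ≤ moreauEnv f T (x k) := by
    intro k
    refine le_ciInf fun z => ?_
    calc f (xhat k) ≤ f (xhat k) + ‖xhat k - x k‖ ^ 2 / (2 * T) := le_add_of_nonneg_right (by positivity)
      _ ≤ f z + ‖z - x k‖ ^ 2 / (2 * T) := hprox k z
  -- squeeze: f (xhat k) → m
  have hxhat : Tendsto (fun k => f (xhat k)) atTop (𝓝 m) :=
    tendsto_of_tendsto_of_tendsto_of_le_of_le tendsto_const_nhds henv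
      (fun k => hmle _) hle
  -- eventually xhat k ∈ S
  have hevS : ∀ᶠ k in atTop, xhat k ∈ S := by
    filter_upwards [hxhat.eventually (eventually_le_nhds (by linarith : m < m + γ))] with k hk
    exact hk
  -- uniform continuity on a compact thickening
  have hKcpt : IsCompact (Metric.cthickening 1 S) := hScpt.cthickening
  have hUC : UniformContinuousOn f (Metric.cthickening 1 S) :=
    hKcpt.uniformContinuousOn_of_continuous hf.continuousOn
  rw [Metric.tendsto_atTop] at hgap ⊢
  rw [Metric.tendsto_atTop] at hxhat
  intro ε hε
  rw [Metric.uniformContinuousOn_iff] at hUC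
  obtain ⟨δ, hδ, hδf⟩ := hUC (ε / 2) (by linarith)
  obtain ⟨N1, hN1⟩ := hgap (min δ 1) (by positivity)
  obtain ⟨N2, hN2⟩ := hxhat (ε / 2) (by linarith)
  obtain ⟨N3, hN3⟩ := (eventually_atTop.1 hevS)
  refine ⟨max N1 (max N2 N3), fun k hk => ?_⟩
  have hk1 := hN1 k (le_trans (le_max_left _ _) hk)
  have hk2 := hN2 k (le_trans (le_trans (le_max_left _ _) (le_max_right _ _)) hk)
  have hk3 := hN3 k (le_trans (le_trans (le_max_right _ _) (le_max_right _ _)) hk)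
  have hdistxk : dist (x k) (xhat k) < min δ 1 := by
    rw [dist_eq_norm]
    simpa using hk1
  have hxhatK : xhat k ∈ Metric.cthickening 1 S :=
    Metric.self_subset_cthickening S hk3
  have hxK : x k ∈ Metric.cthickening 1 S :=
    Metric.mem_cthickening_of_dist_le (x k) (xhat k) 1 S hk3
      (le_of_lt (lt_of_lt_of_le hdistxk (min_le_right _ _)))
  have h1 : dist (f (x k)) (f (xhat k)) < ε / 2 :=
    hδf _ hxK _ hxhatK (lt_of_lt_of_le hdistxk (min_le_left _ _))
  calc dist (f (x k)) m ≤ dist (f (x k)) (f (xhat k)) + dist (f (xhat k)) m :=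
        dist_triangle _ _ _
    _ < ε / 2 + ε / 2 := by
        have := hk2
        exact add_lt_add h1 this
    _ ≤ ε := by linarith
end

section
/- (Global Minimization, Theorem 1.) Let f : ℝ^n → ℝ be continuous and satisfy the γ-minimizers assumption for some γ > 0. Fix parameters 0 < η₋ < 1 < η₊, θ ∈ (0,1), δ > 0, a step size α ∈ (1 − √η₋, 1 + √η₋), and times 0 < τ ≤ t_1 ≤ T with t_1 ≥ ‖x⋆ − x^1‖²/(2γ) for some global minimizer x⋆ of f and initial point x^1 ∈ ℝ^n. Let {x^k}, {x̂^k}, {g^k}, {t_k} be generated by: x̂^k ∈ prox_{t_k f}(x^k), g^k = (x^k − x̂^k)/t_k, x^{k+1} = x^k − α t_k g^k, and t_{k+1} = TimeStep(t_k, g^k, g^{k−1}; τ, T). Then lim_{k→∞} f(x^k) = min_{x ∈ ℝ^n} f(x), and some subsequence of {x^k} converges to a global minimizer of f. -/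
open Filter Topology RealInnerProductSpace

/-- The adaptive time-stepping rule. -/
noncomputable def timeStep {n : ℕ} (ηm ηp θ δ : ℝ) (t : ℝ)
    (p q : EuclideanSpace ℝ (Fin n)) (τ T : ℝ) : ℝ :=
  if ‖p‖ ≤ θ * ‖q‖ + δ then min (ηp * t) T else max (ηm * t) τ

theorem stmt_14 (n : ℕ) (f : EuclideanSpace ℝ (Fin n) → ℝ)
    (hf : Continuous f) (γ : ℝ) (hγ : 0 < γ)
    -- γ-minimizers assumption, part (i)
    (hSne : {z : EuclideanSpace ℝ (Fin n) | f z ≤ (⨅ w, f w) + γ}.Nonempty)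
    (hScpt : IsCompact {z : EuclideanSpace ℝ (Fin n) | f z ≤ (⨅ w, f w) + γ})
    -- γ-minimizers assumption, part (ii)
    (hcrit : ∀ x ∈ {z : EuclideanSpace ℝ (Fin n) | f z ≤ (⨅ w, f w) + γ},
      (0 : EuclideanSpace ℝ (Fin n)) ∈ frechetSubdiff f x → ∀ z, f x ≤ f z)
    -- algorithm parameters
    (ηm ηp θ δ α τ T : ℝ)
    (hηm : 0 < ηm) (hηm1 : ηm < 1) (hηp : 1 < ηp)
    (hθ : θ ∈ Set.Ioo (0 : ℝ) 1) (hδ : 0 < δ)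
    (hα₁ : 1 - Real.sqrt ηm < α) (hα₂ : α < 1 + Real.sqrt ηm)
    -- sequences generated by the algorithm
    (x xhat g : ℕ → EuclideanSpace ℝ (Fin n)) (t : ℕ → ℝ)
    (xstar : EuclideanSpace ℝ (Fin n)) (hxstar : ∀ z, f xstar ≤ f z)
    (hτ : 0 < τ) (hτt : τ ≤ t 0) (htT : t 0 ≤ T)
    (ht1 : ‖xstar - x 0‖ ^ 2 / (2 * γ) ≤ t 0)
    (hprox : ∀ k, xhat k ∈ proxSet f (t k) (x k))
    (hg : ∀ k, g k = (t k)⁻¹ • (x k - xhat k))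
    (hx : ∀ k, x (k + 1) = x k - (α * t k) • g k)
    (ht : ∀ k, t (k + 1) = timeStep ηm ηp θ δ (t k) (g k) (g (k - 1)) τ T) :
    Tendsto (fun k => f (x k)) atTop (𝓝 (f xstar)) ∧
    ∃ φ : ℕ → ℕ, StrictMono φ ∧ ∃ xinf : EuclideanSpace ℝ (Fin n),
      Tendsto (fun k => x (φ k)) atTop (𝓝 xinf) ∧ ∀ z, f xinf ≤ f z := by
  classical
  -- basic facts
  have hbddf : BddBelow (Set.range f) := ⟨f xstar, by rintro _ ⟨z, rfl⟩; exact hxstar z⟩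
  have hinf : (⨅ w, f w) = f xstar :=
    le_antisymm (ciInf_le hbddf xstar) (le_ciInf hxstar)
  -- bounds on the times
  have htb : ∀ k, τ ≤ t k ∧ t k ≤ T := by
    intro k
    induction k with
    | zero => exact ⟨hτt, htT⟩
    | succ k ih =>
      rw [ht k, timeStep]
      have h0 : 0 ≤ t k := hτ.le.trans ih.1
      split_ifs with h
      · exact ⟨le_min (ih.1.trans (le_mul_of_one_le_left h0 hηp.le)) (hτt.trans htT),
          min_le_right _ _⟩
      · exact ⟨le_max_right _ _,
          max_le ((mul_le_of_le_one_left h0 hηm1.le).trans ih.2) (hτt.trans htT)⟩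
  have htpos : ∀ k, 0 < t k := fun k => hτ.trans_le (htb k).1
  have hstep : ∀ k, ηm * t k ≤ t (k + 1) := by
    intro k
    rw [ht k, timeStep]
    split_ifs with h
    · exact le_min (mul_le_mul_of_nonneg_right (hηm1.le.trans hηp.le) (htpos k).le)
        ((mul_le_of_le_one_left (htpos k).le hηm1.le).trans (htb k).2)
    · exact le_max_left _ _
  -- the contraction factor
  have hρ : (1 - α) ^ 2 < ηm := by
    have h1 : -(Real.sqrt ηm) < 1 - α := by linarith
    have h2 : 1 - α < Real.sqrt ηm := by linarith
    calc (1 - α) ^ 2 < Real.sqrt ηm ^ 2 := sq_lt_sq' h1 h2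
      _ = ηm := Real.sq_sqrt hηm.le
  have hc : 0 < 1 - (1 - α) ^ 2 / ηm := by
    have h := (div_lt_one hηm).2 hρ
    linarith
  have hD0 : ∀ k, 0 ≤ ‖xhat k - x k‖ ^ 2 / (2 * t k) := fun k =>
    div_nonneg (sq_nonneg _) (by linarith [htpos k])
  have hP : ∀ k w, f (xhat k) + ‖xhat k - x k‖ ^ 2 / (2 * t k)
      ≤ f w + ‖w - x k‖ ^ 2 / (2 * t k) := fun k w => hprox k w
  -- the algebraic step identity
  have hxs : ∀ k, xhat k - x (k + 1) = (1 - α) • (xhat k - x k) := by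
    intro k
    rw [hx k, hg k, smul_smul, mul_inv_cancel_right₀ (htpos k).ne']
    module
  have hnorm : ∀ k, ‖xhat k - x (k + 1)‖ ^ 2 = (1 - α) ^ 2 * ‖xhat k - x k‖ ^ 2 := by
    intro k
    rw [hxs k, norm_smul, mul_pow, Real.norm_eq_abs, sq_abs]
  -- the descent inequality
  have hdes : ∀ k, f (xhat (k + 1)) + ‖xhat (k + 1) - x (k + 1)‖ ^ 2 / (2 * t (k + 1))
      ≤ (f (xhat k) + ‖xhat k - x k‖ ^ 2 / (2 * t k))
        - (1 - (1 - α) ^ 2 / ηm) * (‖xhat k - x k‖ ^ 2 / (2 * t k)) := by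
    intro k
    have h1' := hP (k + 1) (xhat k)
    rw [hnorm k] at h1'
    have h3 : (1 - α) ^ 2 * ‖xhat k - x k‖ ^ 2 / (2 * t (k + 1))
        ≤ (1 - α) ^ 2 * ‖xhat k - x k‖ ^ 2 / (2 * (ηm * t k)) :=
      div_le_div_of_nonneg_left (by positivity)
        (mul_pos two_pos (mul_pos hηm (htpos k))) (by linarith [hstep k])
    have h4 : (1 - α) ^ 2 * ‖xhat k - x k‖ ^ 2 / (2 * (ηm * t k))
        = ((1 - α) ^ 2 / ηm) * (‖xhat k - x k‖ ^ 2 / (2 * t k)) := by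
      field_simp
    have h5 : (f (xhat k) + ‖xhat k - x k‖ ^ 2 / (2 * t k))
        - (1 - (1 - α) ^ 2 / ηm) * (‖xhat k - x k‖ ^ 2 / (2 * t k))
        = f (xhat k) + ((1 - α) ^ 2 / ηm) * (‖xhat k - x k‖ ^ 2 / (2 * t k)) := by ring
    linarith [h1']
  have hEanti : Antitone (fun k => f (xhat k) + ‖xhat k - x k‖ ^ 2 / (2 * t k)) := by
    apply antitone_nat_of_succ_le
    intro k
    have h1 := mul_nonneg hc.le (hD0 k)
    have h2 := hdes k
    linarith
  have hElb : ∀ k, f xstar ≤ f (xhat k) + ‖xhat k - x k‖ ^ 2 / (2 * t k) := fun k =>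
    (hxstar (xhat k)).trans (le_add_of_nonneg_right (hD0 k))
  obtain ⟨L, hEtend⟩ : ∃ L, Tendsto (fun k => f (xhat k) + ‖xhat k - x k‖ ^ 2 / (2 * t k))
      atTop (𝓝 L) :=
    ⟨_, tendsto_atTop_ciInf hEanti ⟨f xstar, by rintro _ ⟨k, rfl⟩; exact hElb k⟩⟩
  -- the displacement energies tend to zero
  have hDtend : Tendsto (fun k => ‖xhat k - x k‖ ^ 2 / (2 * t k)) atTop (𝓝 0) := by
    have hg0 : Tendsto (fun k =>
        ((f (xhat k) + ‖xhat k - x k‖ ^ 2 / (2 * t k))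
          - (f (xhat (k + 1)) + ‖xhat (k + 1) - x (k + 1)‖ ^ 2 / (2 * t (k + 1))))
          / (1 - (1 - α) ^ 2 / ηm)) atTop (𝓝 0) := by
      have h1 : Tendsto (fun k => f (xhat (k + 1))
          + ‖xhat (k + 1) - x (k + 1)‖ ^ 2 / (2 * t (k + 1))) atTop (𝓝 L) :=
        hEtend.comp (tendsto_add_atTop_nat 1)
      have h2 := (hEtend.sub h1).div_const (1 - (1 - α) ^ 2 / ηm)
      simpa using h2
    refine squeeze_zero hD0 (fun k => ?_) hg0
    rw [le_div_iff₀ hc]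
    linarith [hdes k]
  have hΔsq : Tendsto (fun k => ‖xhat k - x k‖ ^ 2) atTop (𝓝 0) := by
    have hub : ∀ k, ‖xhat k - x k‖ ^ 2 ≤ 2 * T * (‖xhat k - x k‖ ^ 2 / (2 * t k)) := by
      intro k
      calc ‖xhat k - x k‖ ^ 2
          = ‖xhat k - x k‖ ^ 2 / (2 * t k) * (2 * t k) :=
            (div_mul_cancel₀ _ (ne_of_gt (by linarith [htpos k] : (0:ℝ) < 2 * t k))).symm
        _ ≤ ‖xhat k - x k‖ ^ 2 / (2 * t k) * (2 * T) := by
            have := (htb k).2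
            have := hD0 k
            nlinarith
        _ = 2 * T * (‖xhat k - x k‖ ^ 2 / (2 * t k)) := by ring
    have h2T : Tendsto (fun k => 2 * T * (‖xhat k - x k‖ ^ 2 / (2 * t k))) atTop (𝓝 0) := by
      have := hDtend.const_mul (2 * T)
      simpa using this
    exact squeeze_zero (fun k => sq_nonneg _) hub h2T
  have hΔnorm : Tendsto (fun k => ‖xhat k - x k‖) atTop (𝓝 0) := by
    have h1 := (Real.continuous_sqrt.tendsto 0).comp hΔsq
    have heq : (Real.sqrt ∘ fun k => ‖xhat k - x k‖ ^ 2) = fun k => ‖xhat k - x k‖ := by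
      funext k
      simp [Function.comp, Real.sqrt_sq (norm_nonneg _)]
    rw [heq] at h1
    simpa using h1
  have hΔ : Tendsto (fun k => xhat k - x k) atTop (𝓝 0) :=
    tendsto_zero_iff_norm_tendsto_zero.2 hΔnorm
  -- all prox points lie in the sublevel set
  have hE0 : f (xhat 0) + ‖xhat 0 - x 0‖ ^ 2 / (2 * t 0) ≤ f xstar + γ := by
    have h1 := hP 0 xstar
    have h2 : ‖xstar - x 0‖ ^ 2 / (2 * t 0) ≤ γ := by
      rw [div_le_iff₀ (by linarith [htpos 0] : (0:ℝ) < 2 * t 0)]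
      rw [div_le_iff₀ (by linarith : (0:ℝ) < 2 * γ)] at ht1
      nlinarith [htpos 0]
    linarith
  have hmemS : ∀ k, xhat k ∈ {z : EuclideanSpace ℝ (Fin n) | f z ≤ (⨅ w, f w) + γ} := by
    intro k
    have h1 : f (xhat k) ≤ f (xhat k) + ‖xhat k - x k‖ ^ 2 / (2 * t k) :=
      le_add_of_nonneg_right (hD0 k)
    have h2 := hEanti (Nat.zero_le k)
    simp only [Set.mem_setOf_eq, hinf]
    dsimp only at h2
    linarith
  obtain ⟨xinf, hxinfS, φ, hφ, hconv⟩ := hScpt.tendsto_subseq hmemS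
  have hφt : Tendsto φ atTop atTop := hφ.tendsto_atTop
  have hconv' : Tendsto (fun k => xhat (φ k)) atTop (𝓝 xinf) := hconv
  have hxconv : Tendsto (fun k => x (φ k)) atTop (𝓝 xinf) := by
    have h1 := hconv'.sub (hΔ.comp hφt)
    simp only [Function.comp_def, sub_sub_cancel, sub_zero] at h1
    exact h1
  -- key limiting inequality
  have hkeyk : ∀ k w, f (xhat k) ≤ f w + ‖w - x k‖ ^ 2 / (2 * τ) := by
    intro k w
    have h1 : f (xhat k) ≤ f w + ‖w - x k‖ ^ 2 / (2 * t k) :=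
      (le_add_of_nonneg_right (hD0 k)).trans (hP k w)
    have h2 : ‖w - x k‖ ^ 2 / (2 * t k) ≤ ‖w - x k‖ ^ 2 / (2 * τ) :=
      div_le_div_of_nonneg_left (sq_nonneg _) (by linarith) (by linarith [(htb k).1])
    linarith
  have hkey : ∀ w, f xinf ≤ f w + ‖w - xinf‖ ^ 2 / (2 * τ) := by
    intro w
    have hL1 : Tendsto (fun k => f (xhat (φ k))) atTop (𝓝 (f xinf)) :=
      (hf.tendsto xinf).comp hconv'
    have hR1 : Tendsto (fun k => f w + ‖w - x (φ k)‖ ^ 2 / (2 * τ)) atTop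
        (𝓝 (f w + ‖w - xinf‖ ^ 2 / (2 * τ))) := by
      have h1 : Tendsto (fun k => w - x (φ k)) atTop (𝓝 (w - xinf)) :=
        tendsto_const_nhds.sub hxconv
      exact tendsto_const_nhds.add ((h1.norm.pow 2).div_const (2 * τ))
    exact le_of_tendsto_of_tendsto' hL1 hR1 fun k => hkeyk (φ k) w
  -- the Fréchet subdifferential condition at xinf
  have hsubd : (0 : EuclideanSpace ℝ (Fin n)) ∈ frechetSubdiff f xinf := by
    simp only [frechetSubdiff, Set.mem_setOf_eq, inner_zero_left, sub_zero]
    rw [Filter.liminf_eq]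
    have hmemA : ∀ ε : ℝ, 0 < ε →
        -ε ∈ {a : ℝ | ∀ᶠ z in 𝓝[≠] xinf, a ≤ (f z - f xinf) / ‖z - xinf‖} := by
      intro ε hε
      have hball : ∀ᶠ z in 𝓝[≠] xinf, z ∈ Metric.ball xinf (2 * τ * ε) :=
        mem_nhdsWithin_of_mem_nhds (Metric.ball_mem_nhds xinf (by positivity))
      have hne : ∀ᶠ z in 𝓝[≠] xinf, z ∈ ({xinf}ᶜ : Set (EuclideanSpace ℝ (Fin n))) :=
        self_mem_nhdsWithin
      filter_upwards [hball, hne] with z hz hzne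
      have h3 : 0 < ‖z - xinf‖ := by
        rw [norm_pos_iff, sub_ne_zero]
        exact hzne
      have hdist : ‖z - xinf‖ < 2 * τ * ε := by
        rw [← dist_eq_norm]
        exact Metric.mem_ball.1 hz
      have h1 : f xinf ≤ f z + ‖z - xinf‖ ^ 2 / (2 * τ) := hkey z
      have h1' : (f xinf - f z) * (2 * τ) ≤ ‖z - xinf‖ ^ 2 := by
        rw [← le_div_iff₀ (by linarith : (0:ℝ) < 2 * τ)]
        linarith
      rw [le_div_iff₀ h3]
      nlinarith [mul_lt_mul_of_pos_left hdist h3]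
    by_cases hbA : BddAbove {a : ℝ | ∀ᶠ z in 𝓝[≠] xinf, a ≤ (f z - f xinf) / ‖z - xinf‖}
    · refine le_of_forall_pos_le_add fun ε hε => ?_
      have := le_csSup hbA (hmemA ε hε)
      linarith
    · rw [Real.sSup_of_not_bddAbove hbA]
  -- xinf is a global minimizer
  have hmin : ∀ z, f xinf ≤ f z := hcrit xinf hxinfS hsubd
  have hfeq : f xinf = f xstar := le_antisymm (hmin xstar) (hxstar xinf)
  -- f (xhat k) → f xstar
  have hfhatL : Tendsto (fun k => f (xhat k)) atTop (𝓝 L) := by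
    have h1 := hEtend.sub hDtend
    simp only [add_sub_cancel_right, sub_zero] at h1
    exact h1
  have hLeq : L = f xstar := by
    have h1 : Tendsto (fun k => f (xhat (φ k))) atTop (𝓝 L) := hfhatL.comp hφt
    have h2 : Tendsto (fun k => f (xhat (φ k))) atTop (𝓝 (f xinf)) :=
      (hf.tendsto xinf).comp hconv'
    rw [← hfeq]
    exact tendsto_nhds_unique h1 h2
  have hfhat : Tendsto (fun k => f (xhat k)) atTop (𝓝 (f xstar)) := hLeq ▸ hfhatL
  -- conclusion
  refine ⟨?_, φ, hφ, xinf, hxconv, hmin⟩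
  apply tendsto_of_subseq_tendsto
  intro ns hns
  obtain ⟨p, hpS, ms, hms, hmsc⟩ := hScpt.tendsto_subseq fun k => hmemS (ns k)
  refine ⟨ms, ?_⟩
  have hcomp : Tendsto (fun m => ns (ms m)) atTop atTop := hns.comp hms.tendsto_atTop
  have hmsc' : Tendsto (fun m => xhat (ns (ms m))) atTop (𝓝 p) := hmsc
  have hx' : Tendsto (fun m => x (ns (ms m))) atTop (𝓝 p) := by
    have h1 := hmsc'.sub (hΔ.comp hcomp)
    simp only [Function.comp_def, sub_sub_cancel, sub_zero] at h1
    exact h1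
  have h1 : Tendsto (fun m => f (xhat (ns (ms m)))) atTop (𝓝 (f xstar)) := hfhat.comp hcomp
  have h2 : Tendsto (fun m => f (xhat (ns (ms m)))) atTop (𝓝 (f p)) :=
    (hf.tendsto p).comp hmsc'
  have hfp : f p = f xstar := tendsto_nhds_unique h2 h1
  exact hfp ▸ (hf.tendsto p).comp hx'
end
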